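/- arXiv:2312.14596 — 9 statements merged into one kernel-verified Lean document; each statement's English description precedes it below -/
import Mathlib

section
/- For all cumulative distribution functions F and G on the real line and every δ ≥ 0, the Lévy gauge and the Lévy metric satisfy min(δ, L_δ(F,G)) ≤ L(F,G) ≤ max(δ, L_δ(F,G)). -/
open Filter MeasureTheory Set

/-- A cumulative distribution function on ℝ: nondecreasing, right-continuous,
with limit 0 at -∞ and 1 at +∞. -/
def IsCDF (F : ℝ → ℝ) : Prop :=
  Monotone F ∧ (∀ t : ℝ, ContinuousWithinAt F (Set.Ici t) t) ∧
    Tendsto F atBot (nhds 0) ∧ Tendsto F atTop (nhds 1)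

/-- The Lévy gauge with tolerance `δ` between two cdfs. -/
noncomputable def levyGauge (δ : ℝ) (F G : ℝ → ℝ) : ℝ :=
  sInf {ε : ℝ | 0 ≤ ε ∧ ∀ t : ℝ, F (t - δ) - ε ≤ G t ∧ G t ≤ F (t + δ) + ε}

/-- The Lévy metric between two cdfs. -/
noncomputable def levyMetric (F G : ℝ → ℝ) : ℝ :=
  sInf {ε : ℝ | 0 ≤ ε ∧ ∀ t : ℝ, F (t - ε) - ε ≤ G t ∧ G t ≤ F (t + ε) + ε}

lemma IsCDF.nonneg {F : ℝ → ℝ} (hF : IsCDF F) (x : ℝ) : 0 ≤ F x :=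
  le_of_tendsto hF.2.2.1 (eventually_atBot.2 ⟨x, fun y hy => hF.1 hy⟩)

lemma IsCDF.le_one {F : ℝ → ℝ} (hF : IsCDF F) (x : ℝ) : F x ≤ 1 :=
  ge_of_tendsto hF.2.2.2 (eventually_atTop.2 ⟨x, fun y hy => hF.1 hy⟩)

/-- The Lévy gauge and the Lévy metric satisfy
`min(δ, L_δ(F,G)) ≤ L(F,G) ≤ max(δ, L_δ(F,G))`. -/
theorem levyGauge_levyMetric (F G : ℝ → ℝ) (hF : IsCDF F) (hG : IsCDF G)
    (δ : ℝ) (hδ : 0 ≤ δ) :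
    min δ (levyGauge δ F G) ≤ levyMetric F G ∧
      levyMetric F G ≤ max δ (levyGauge δ F G) := by
  set Sg := {ε : ℝ | 0 ≤ ε ∧ ∀ t : ℝ, F (t - δ) - ε ≤ G t ∧ G t ≤ F (t + δ) + ε} with hSg
  set Sm := {ε : ℝ | 0 ≤ ε ∧ ∀ t : ℝ, F (t - ε) - ε ≤ G t ∧ G t ≤ F (t + ε) + ε} with hSm
  have hone : ∀ γ : ℝ, (1 : ℝ) ∈ {ε : ℝ | 0 ≤ ε ∧
      ∀ t : ℝ, F (t - γ) - ε ≤ G t ∧ G t ≤ F (t + γ) + ε} := by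
    intro γ
    refine ⟨zero_le_one, fun t => ⟨?_, ?_⟩⟩
    · linarith [hF.le_one (t - γ), hG.nonneg t]
    · linarith [hF.nonneg (t + γ), hG.le_one t]
  have hSgne : Sg.Nonempty := ⟨1, hone δ⟩
  have hSmne : Sm.Nonempty := ⟨1, hone 1⟩
  have hSgbdd : BddBelow Sg := ⟨0, fun ε hε => hε.1⟩
  have hSmbdd : BddBelow Sm := ⟨0, fun ε hε => hε.1⟩
  constructor
  · -- lower bound
    apply le_csInf hSmne
    intro ε hε
    rcases le_or_gt δ ε with h | h
    · exact le_trans (min_le_left _ _) h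
    · refine le_trans (min_le_right _ _) (csInf_le hSgbdd ?_)
      refine ⟨hε.1, fun t => ⟨?_, ?_⟩⟩
      · have := (hε.2 t).1
        have h1 : F (t - δ) ≤ F (t - ε) := hF.1 (by linarith)
        linarith
      · have := (hε.2 t).2
        have h1 : F (t + ε) ≤ F (t + δ) := hF.1 (by linarith)
        linarith
  · -- upper bound
    by_contra hcon
    push_neg at hcon
    have hδlt : δ < levyMetric F G := lt_of_le_of_lt (le_max_left _ _) hcon
    have hglt : levyGauge δ F G < levyMetric F G :=
      lt_of_le_of_lt (le_max_right _ _) hcon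
    obtain ⟨ε, hεmem, hεlt⟩ := exists_lt_of_csInf_lt hSgne hglt
    have hmem : max δ ε ∈ Sm := by
      refine ⟨le_trans hδ (le_max_left _ _), fun t => ⟨?_, ?_⟩⟩
      · have h1 : F (t - max δ ε) ≤ F (t - δ) := hF.1 (by linarith [le_max_left δ ε])
        have := (hεmem.2 t).1
        have h2 : ε ≤ max δ ε := le_max_right _ _
        linarith
      · have h1 : F (t + δ) ≤ F (t + max δ ε) := hF.1 (by linarith [le_max_left δ ε])
        have := (hεmem.2 t).2
        have h2 : ε ≤ max δ ε := le_max_right _ _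
        linarith
    have : levyMetric F G ≤ max δ ε := csInf_le hSmbdd hmem
    have : max δ ε < levyMetric F G := max_lt hδlt hεlt
    linarith
end

section
/- Let F and F_n (n ∈ ℕ) be cumulative distribution functions on the real line. Then F_n converges weakly to F (i.e., F_n(t) → F(t) for every continuity point t of F) if and only if lim_{n→∞} L_δ(F, F_n) = 0 for every δ > 0. -/
open Filter MeasureTheory Set

lemma IsCDF.nonneg_s7 {F : ℝ → ℝ} (h : IsCDF F) (t : ℝ) : 0 ≤ F t :=
  le_of_tendsto h.2.2.1 (eventually_atBot.2 ⟨t, fun _ hs => h.1 hs⟩)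

lemma IsCDF.le_one_s7 {F : ℝ → ℝ} (h : IsCDF F) (t : ℝ) : F t ≤ 1 :=
  ge_of_tendsto h.2.2.2 (eventually_atTop.2 ⟨t, fun _ hs => h.1 hs⟩)

lemma one_mem_levySet {δ : ℝ} {F G : ℝ → ℝ} (hF : IsCDF F) (hG : IsCDF G) :
    (1 : ℝ) ∈ {ε : ℝ | 0 ≤ ε ∧ ∀ t : ℝ, F (t - δ) - ε ≤ G t ∧ G t ≤ F (t + δ) + ε} := by
  refine ⟨zero_le_one, fun t => ⟨?_, ?_⟩⟩
  · have := hF.le_one_s7 (t - δ); have := hG.nonneg_s7 t; linarith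
  · have := hG.le_one_s7 t; have := hF.nonneg_s7 (t + δ); linarith

lemma levySet_bddBelow {δ : ℝ} {F G : ℝ → ℝ} :
    BddBelow {ε : ℝ | 0 ≤ ε ∧ ∀ t : ℝ, F (t - δ) - ε ≤ G t ∧ G t ≤ F (t + δ) + ε} :=
  ⟨0, fun _ hb => hb.1⟩

lemma levyGauge_nonneg {δ : ℝ} {F G : ℝ → ℝ} (hF : IsCDF F) (hG : IsCDF G) :
    0 ≤ levyGauge δ F G :=
  le_csInf ⟨1, one_mem_levySet hF hG⟩ fun _ hb => hb.1

/-- `F_n` converges weakly to `F` (convergence at all continuity points of `F`) iff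
`L_δ(F, F_n) → 0` for every positive `δ`. -/
theorem levyGauge_weakConvergence (F : ℝ → ℝ) (Fn : ℕ → ℝ → ℝ)
    (hF : IsCDF F) (hFn : ∀ n, IsCDF (Fn n)) :
    (∀ t : ℝ, ContinuousAt F t → Tendsto (fun n => Fn n t) atTop (nhds (F t))) ↔
      (∀ δ : ℝ, 0 < δ → Tendsto (fun n => levyGauge δ F (Fn n)) atTop (nhds 0)) := by
  constructor
  · intro hw δ hδ
    rw [tendsto_order]
    constructor
    · intro a ha
      exact Eventually.of_forall fun n => lt_of_lt_of_le ha (levyGauge_nonneg hF (hFn n))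
    intro ε hε
    -- work with ε' = ε/3, show eventually levyGauge ≤ 2ε' < ε
    set ε' : ℝ := ε / 3 with hε'def
    have hε' : 0 < ε' := by positivity
    set h : ℝ := δ / 2 with hhdef
    have hh : 0 < h := by positivity
    -- dense continuity points
    have hd : Dense {x : ℝ | ¬ ContinuousAt F x}ᶜ :=
      Set.Countable.dense_compl ℝ hF.1.countable_not_continuousAt
    have hex : ∀ i : ℤ, ∃ y : ℝ, ContinuousAt F y ∧ y ∈ Ioo ((i : ℝ) * h) ((i + 1 : ℝ) * h) := by
      intro i
      have hlt : (i : ℝ) * h < (i + 1 : ℝ) * h := by nlinarith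
      obtain ⟨y, hy, hy2⟩ := hd.exists_between hlt
      exact ⟨y, not_not.1 hy, hy2⟩
    choose x hx1 hx2 using hex
    -- tail bounds for F
    obtain ⟨M1, hM1⟩ := eventually_atTop.1 ((tendsto_order.1 hF.2.2.2).1 (1 - ε') (by linarith))
    obtain ⟨M0, hM0⟩ := eventually_atBot.1 ((tendsto_order.1 hF.2.2.1).2 ε' hε')
    -- choose N
    obtain ⟨N, hN1, hNM1, hNM0⟩ :
        ∃ N : ℤ, 1 ≤ N ∧ M1 ≤ (N : ℝ) * h ∧ ((1 : ℝ) - N) * h ≤ M0 := by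
      refine ⟨max 1 (max ⌈M1 / h⌉ ⌈(h - M0) / h⌉), le_max_left _ _, ?_, ?_⟩
      · have h1 : (⌈M1 / h⌉ : ℝ) ≤ ((max 1 (max ⌈M1 / h⌉ ⌈(h - M0) / h⌉) : ℤ) : ℝ) := by
          exact_mod_cast ((le_max_left _ _).trans (le_max_right _ _))
        have h2 : M1 / h ≤ (⌈M1 / h⌉ : ℝ) := Int.le_ceil _
        rw [div_le_iff₀ hh] at h2
        nlinarith
      · have h1 : (⌈(h - M0) / h⌉ : ℝ) ≤ ((max 1 (max ⌈M1 / h⌉ ⌈(h - M0) / h⌉) : ℤ) : ℝ) := by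
          exact_mod_cast ((le_max_right _ _).trans (le_max_right _ _))
        have h2 : (h - M0) / h ≤ (⌈(h - M0) / h⌉ : ℝ) := Int.le_ceil _
        rw [div_le_iff₀ hh] at h2
        nlinarith
    have hFlow : F ((1 - (N : ℝ)) * h) < ε' := hM0 _ hNM0
    have hFhigh : 1 - ε' < F ((N : ℝ) * h) := hM1 _ hNM1
    -- eventual closeness at all grid points
    have hev : ∀ᶠ n in atTop, ∀ i ∈ Finset.Icc (-N) N, |Fn n (x i) - F (x i)| < ε' := by
      rw [eventually_all_finset]
      intro i _
      have := hw (x i) (hx1 i)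
      rw [Metric.tendsto_atTop] at this
      obtain ⟨K, hK⟩ := this ε' hε'
      exact eventually_atTop.2 ⟨K, fun n hn => by simpa [Real.dist_eq] using hK n hn⟩
    filter_upwards [hev] with n hn
    -- show 2ε' is in the set
    have hmem : (2 * ε') ∈
        {c : ℝ | 0 ≤ c ∧ ∀ t : ℝ, F (t - δ) - c ≤ Fn n t ∧ Fn n t ≤ F (t + δ) + c} := by
      refine ⟨by linarith, fun t => ?_⟩
      have hclose : ∀ i ∈ Finset.Icc (-N) N,
          F (x i) - ε' ≤ Fn n (x i) ∧ Fn n (x i) ≤ F (x i) + ε' := by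
        intro i hi
        have := abs_lt.1 (hn i hi)
        constructor <;> linarith [this.1, this.2]
      have hNmem : (-N) ∈ Finset.Icc (-N) N := Finset.mem_Icc.2 ⟨le_refl _, by linarith⟩
      have hNmem' : N ∈ Finset.Icc (-N) N := Finset.mem_Icc.2 ⟨by linarith, le_refl _⟩
      by_cases hA : t < x (-N)
      · constructor
        · -- F (t - δ) ≤ F (x (-N)) ≤ F ((1-N)h) < ε'
          have h1 : F (t - δ) ≤ F ((1 - (N : ℝ)) * h) := by
            apply hF.1
            have := hx2 (-N)
            have : x (-N) < ((-N : ℤ) + 1 : ℝ) * h := (hx2 (-N)).2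
            push_cast at this
            nlinarith
          have := (hFn n).nonneg_s7 t
          linarith
        · have h1 : Fn n t ≤ Fn n (x (-N)) := (hFn n).1 hA.le
          have h2 := (hclose _ hNmem).2
          have h3 : F (x (-N)) ≤ F ((1 - (N : ℝ)) * h) := by
            apply hF.1
            have := (hx2 (-N)).2
            push_cast at this
            linarith
          have := hF.nonneg_s7 (t + δ)
          linarith
      by_cases hB : x N < t
      · push_neg at hA
        constructor
        · have h1 : Fn n (x N) ≤ Fn n t := (hFn n).1 hB.le
          have h2 := (hclose _ hNmem').1
          have h3 : 1 - ε' < F (x N) := by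
            have : ((N : ℝ)) * h < x N := by
              have := (hx2 N).1; push_cast at this; linarith
            exact lt_of_lt_of_le hFhigh (hF.1 this.le)
          have := hF.le_one_s7 (t - δ)
          linarith
        · have h1 : F (x N) ≤ F (t + δ) := by
            apply hF.1; linarith
          have h2 : 1 - ε' < F (x N) := by
            have : ((N : ℝ)) * h < x N := by
              have := (hx2 N).1; push_cast at this; linarith
            exact lt_of_lt_of_le hFhigh (hF.1 this.le)
          have := (hFn n).le_one_s7 t
          linarith
      · push_neg at hA hB
        set i : ℤ := ⌊t / h⌋ with hidef
        have hfl : (i : ℝ) * h ≤ t := by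
          have := Int.floor_le (t / h)
          rw [← hidef] at this
          calc (i : ℝ) * h ≤ (t / h) * h := by nlinarith
            _ = t := by field_simp
        have hfl2 : t < ((i : ℝ) + 1) * h := by
          have := Int.lt_floor_add_one (t / h)
          rw [← hidef] at this
          calc t = (t / h) * h := by field_simp
            _ < ((i : ℝ) + 1) * h := by nlinarith
        -- bounds on i
        have hiub : i ≤ N := by
          have hxN : x N < ((N : ℝ) + 1) * h := by
            have := (hx2 N).2; push_cast at this; linarith
          have : (i : ℝ) * h < ((N : ℝ) + 1) * h := lt_of_le_of_lt (hfl.trans hB) hxN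
          have : (i : ℝ) < (N : ℝ) + 1 := by nlinarith
          exact_mod_cast Int.lt_add_one_iff.1 (by exact_mod_cast this)
        have hilb : -N ≤ i + 1 := by
          have hxN : (-(N : ℝ)) * h < x (-N) := by
            have := (hx2 (-N)).1; push_cast at this; linarith
          have : (-(N : ℝ)) * h < ((i : ℝ) + 1) * h := lt_of_lt_of_le hxN (hA.trans hfl2.le)
          have : (-(N : ℝ)) < (i : ℝ) + 1 := by nlinarith
          exact_mod_cast this.le
        set j : ℤ := max (i - 1) (-N) with hjdef
        set m : ℤ := min (i + 1) N with hmdef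
        have hjmem : j ∈ Finset.Icc (-N) N :=
          Finset.mem_Icc.2 ⟨le_max_right _ _, max_le (by omega) (by omega)⟩
        have hmmem : m ∈ Finset.Icc (-N) N :=
          Finset.mem_Icc.2 ⟨le_min (by omega) (by omega), min_le_right _ _⟩
        -- x j ≤ t and t - δ ≤ x j
        have hxj_le : x j ≤ t ∧ t - δ ≤ x j := by
          rcases le_or_gt (-N) (i - 1) with hcase | hcase
          · have hj : j = i - 1 := max_eq_left hcase
            rw [hj]
            have h1 := (hx2 (i - 1)).1
            have h2 := (hx2 (i - 1)).2
            push_cast at h1 h2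
            constructor
            · linarith
            · have : t - δ = t - 2 * h := by rw [hhdef]; ring
              nlinarith
          · have hj : j = -N := max_eq_right hcase.le
            rw [hj]
            have hiN : i ≤ -N := by omega
            have h1 := (hx2 (-N)).1
            push_cast at h1
            constructor
            · exact hA
            · have hih : (i : ℝ) ≤ (-N : ℤ) := by exact_mod_cast hiN
              push_cast at hih
              have : t - δ = t - 2 * h := by rw [hhdef]; ring
              nlinarith
        -- t ≤ x m and x m ≤ t + δ
        have hxm_le : t ≤ x m ∧ x m ≤ t + δ := by
          rcases le_or_gt (i + 1) N with hcase | hcase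
          · have hm : m = i + 1 := min_eq_left hcase
            rw [hm]
            have h1 := (hx2 (i + 1)).1
            have h2 := (hx2 (i + 1)).2
            push_cast at h1 h2
            constructor
            · linarith
            · have : t + δ = t + 2 * h := by rw [hhdef]; ring
              nlinarith
          · have hm : m = N := min_eq_right hcase.le
            rw [hm]
            have hiN : N ≤ i := by omega
            have h2 := (hx2 N).2
            push_cast at h2
            constructor
            · exact hB
            · have hih : (N : ℝ) ≤ (i : ℝ) := by exact_mod_cast hiN
              have : t + δ = t + 2 * h := by rw [hhdef]; ring
              nlinarith
        constructor
        · have h1 : F (t - δ) ≤ F (x j) := hF.1 hxj_le.2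
          have h2 := (hclose _ hjmem).1
          have h3 : Fn n (x j) ≤ Fn n t := (hFn n).1 hxj_le.1
          linarith
        · have h1 : Fn n t ≤ Fn n (x m) := (hFn n).1 hxm_le.1
          have h2 := (hclose _ hmmem).2
          have h3 : F (x m) ≤ F (t + δ) := hF.1 hxm_le.2
          linarith
    calc levyGauge δ F (Fn n) ≤ 2 * ε' := csInf_le levySet_bddBelow hmem
      _ < ε := by rw [hε'def]; linarith
  · intro hL t ht
    rw [Metric.tendsto_atTop]
    intro ε hε
    rw [Metric.continuousAt_iff] at ht
    obtain ⟨δ0, hδ0, hδ0'⟩ := ht (ε / 4) (by linarith)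
    set δ : ℝ := δ0 / 2 with hδdef
    have hδ : 0 < δ := by positivity
    have hup : F (t + δ) < F t + ε / 4 := by
      have := hδ0' (show dist (t + δ) t < δ0 by
        rw [Real.dist_eq, show t + δ - t = δ by ring, abs_of_pos hδ]; linarith)
      rw [Real.dist_eq] at this
      have := abs_lt.1 this
      linarith [this.1, this.2]
    have hdown : F t - ε / 4 < F (t - δ) := by
      have := hδ0' (show dist (t - δ) t < δ0 by
        rw [Real.dist_eq, show t - δ - t = -δ by ring, abs_neg, abs_of_pos hδ]; linarith)
      rw [Real.dist_eq] at this
      have := abs_lt.1 this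
      linarith [this.1, this.2]
    have hev := (tendsto_order.1 (hL δ hδ)).2 (ε / 4) (by linarith)
    obtain ⟨K, hK⟩ := eventually_atTop.1 hev
    refine ⟨K, fun n hn => ?_⟩
    obtain ⟨c, hc, hclt⟩ :=
      exists_lt_of_csInf_lt ⟨1, one_mem_levySet hF (hFn n)⟩ (hK n hn)
    have hb := hc.2 t
    rw [Real.dist_eq, abs_lt]
    constructor <;> [skip; skip] <;>
      · have h1 := hb.1
        have h2 := hb.2
        linarith
end

section
/- Let F and G be cumulative distribution functions on the real line and let ε ≥ 0, δ ≥ 0. Then L_δ(F,G) ≤ ε if and only if Q_{α−ε}(F) − δ ≤ Q_α(G) ≤ Q_{α+ε}(F) + δ holds for all α ∈ ℝ (inequalities in the extended reals). In particular, L_δ(F,G) = inf{ε ≥ 0 : Q_{α−ε}(F) − δ ≤ Q_α(G) ≤ Q_{α+ε}(F) + δ for all α ∈ ℝ}. -/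
open Filter MeasureTheory Set

/-- The `α`-quantile `Q_α(F) := inf {x : ℝ | F x ≥ α}` as an extended real,
with `inf ∅ = +∞` (so `Q_α(F) = -∞` for `α ≤ 0` and `Q_α(F) = +∞` for `α > 1`). -/
noncomputable def cdfQuantile (F : ℝ → ℝ) (α : ℝ) : EReal :=
  sInf ((fun x : ℝ => (x : EReal)) '' {x : ℝ | α ≤ F x})

lemma cdfQuantile_le_iff {F : ℝ → ℝ} {α y : ℝ} (hF : Monotone F)
    (hy : ContinuousWithinAt F (Ici y) y) : cdfQuantile F α ≤ y ↔ α ≤ F y := by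
  refine ⟨fun hQ => ?_, fun h => sInf_le ⟨y, h, rfl⟩⟩
  by_contra! hFy
  -- right-continuity keeps `F < α` on some `[y, z)`, so `z` bounds `{x | α ≤ F x}` from below
  obtain ⟨z, hyz, hz⟩ := mem_nhdsGE_iff_exists_Ico_subset.1 (hy.eventually_lt_const hFy)
  have hzQ : (z : EReal) ≤ cdfQuantile F α := by
    refine le_sInf (forall_mem_image.2 fun x (hx : α ≤ F x) => EReal.coe_le_coe_iff.2 ?_)
    by_contra! hxz
    exact (hx.trans (hF (le_max_left x y))).not_gt (hz ⟨le_max_right x y, max_lt hxz hyz⟩)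
  exact (hzQ.trans hQ).not_gt (EReal.coe_lt_coe_iff.2 hyz)

lemma le_cdfQuantile_add_iff {F : ℝ → ℝ} {q : EReal} {β δ : ℝ} :
    q ≤ cdfQuantile F β + δ ↔ ∀ x, β ≤ F x → q ≤ ((x + δ : ℝ) : EReal) := by
  simp only [← EReal.sub_le_iff_le_add (.inl (EReal.coe_ne_bot δ)) (.inl (EReal.coe_ne_top δ)),
    cdfQuantile, le_sInf_iff, forall_mem_image, EReal.coe_add]
  rfl

lemma forall_cdfQuantile_le_add_iff {F G : ℝ → ℝ} (hG : IsCDF G) (ε δ : ℝ) :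
    (∀ α, cdfQuantile G α ≤ cdfQuantile F (α + ε) + δ) ↔ ∀ t, F (t - δ) - ε ≤ G t := by
  simp only [le_cdfQuantile_add_iff, cdfQuantile_le_iff hG.1 (hG.2.1 _)]
  refine ⟨fun h t => ?_, fun h α x hx => ?_⟩
  · simpa using h (F (t - δ) - ε) (t - δ) (by simp)
  · linarith [add_sub_cancel_right x δ ▸ h (x + δ)]

lemma forall_cdfQuantile_sub_le_iff {F G : ℝ → ℝ} (hF : IsCDF F) (ε δ : ℝ) :
    (∀ α, cdfQuantile F (α - ε) - δ ≤ cdfQuantile G α) ↔ ∀ t, G t ≤ F (t + δ) + ε := by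
  simp only [EReal.sub_le_iff_le_add (.inl (EReal.coe_ne_bot δ)) (.inl (EReal.coe_ne_top δ))]
  have shift : (∀ α, cdfQuantile F (α - ε) ≤ cdfQuantile G α + δ) ↔
      ∀ α, cdfQuantile F α ≤ cdfQuantile G (α + ε) + δ :=
    ⟨fun h α => by simpa using h (α + ε), fun h α => by simpa using h (α - ε)⟩
  rw [shift, forall_cdfQuantile_le_add_iff hF]
  refine ⟨fun h t => ?_, fun h t => ?_⟩
  · linarith [add_sub_cancel_right t δ ▸ h (t + δ)]
  · linarith [sub_add_cancel t δ ▸ h (t - δ)]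

lemma levyGauge_le_iff {F G : ℝ → ℝ} (hF : IsCDF F) (hG : IsCDF G) {ε δ : ℝ} (hε : 0 ≤ ε) :
    levyGauge δ F G ≤ ε ↔ ∀ t, F (t - δ) - ε ≤ G t ∧ G t ≤ F (t + δ) + ε := by
  set S := {ε : ℝ | 0 ≤ ε ∧ ∀ t : ℝ, F (t - δ) - ε ≤ G t ∧ G t ≤ F (t + δ) + ε}
  change sInf S ≤ ε ↔ _
  have hS : S.Nonempty := ⟨1, zero_le_one, fun t =>
    ⟨by linarith [hF.le_one (t - δ), hG.nonneg t], by linarith [hG.le_one t, hF.nonneg (t + δ)]⟩⟩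
  refine ⟨fun h t => ⟨?_, ?_⟩, fun h => csInf_le ⟨0, fun _ hx => hx.1⟩ ⟨hε, h⟩⟩
  · have : F (t - δ) - G t ≤ sInf S := le_csInf hS fun _ hx => by linarith [(hx.2 t).1]
    linarith
  · have : G t - F (t + δ) ≤ sInf S := le_csInf hS fun _ hx => by linarith [(hx.2 t).2]
    linarith

lemma levyBand_iff_quantileBand {F G : ℝ → ℝ} (hF : IsCDF F) (hG : IsCDF G) (ε δ : ℝ) :
    (∀ t, F (t - δ) - ε ≤ G t ∧ G t ≤ F (t + δ) + ε) ↔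
      ∀ α, cdfQuantile F (α - ε) - δ ≤ cdfQuantile G α ∧
        cdfQuantile G α ≤ cdfQuantile F (α + ε) + δ := by
  rw [forall_and, forall_and, forall_cdfQuantile_sub_le_iff hF,
    forall_cdfQuantile_le_add_iff hG, and_comm]

theorem levyGauge_le_iff_quantiles_general (F G : ℝ → ℝ) (hF : IsCDF F) (hG : IsCDF G)
    (ε δ : ℝ) (hε : 0 ≤ ε) :
    (levyGauge δ F G ≤ ε ↔
      ∀ α : ℝ, cdfQuantile F (α - ε) - (δ : EReal) ≤ cdfQuantile G α ∧
        cdfQuantile G α ≤ cdfQuantile F (α + ε) + (δ : EReal)) ∧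
    levyGauge δ F G =
      sInf {ε' : ℝ | 0 ≤ ε' ∧ ∀ α : ℝ,
        cdfQuantile F (α - ε') - (δ : EReal) ≤ cdfQuantile G α ∧
          cdfQuantile G α ≤ cdfQuantile F (α + ε') + (δ : EReal)} :=
  ⟨(levyGauge_le_iff hF hG hε).trans (levyBand_iff_quantileBand hF hG ε δ), by
    simp_rw [levyGauge, levyBand_iff_quantileBand hF hG]⟩

/-- `L_δ(F,G) ≤ ε` iff the quantile inequalities
`Q_{α-ε}(F) - δ ≤ Q_α(G) ≤ Q_{α+ε}(F) + δ` hold for all `α ∈ ℝ`; in particular the Lévy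
gauge can be defined via quantiles. -/
theorem levyGauge_le_iff_quantiles (F G : ℝ → ℝ) (hF : IsCDF F) (hG : IsCDF G)
    (ε δ : ℝ) (hε : 0 ≤ ε) (hδ : 0 ≤ δ) :
    (levyGauge δ F G ≤ ε ↔
      ∀ α : ℝ, cdfQuantile F (α - ε) - (δ : EReal) ≤ cdfQuantile G α ∧
        cdfQuantile G α ≤ cdfQuantile F (α + ε) + (δ : EReal)) ∧
    levyGauge δ F G =
      sInf {ε' : ℝ | 0 ≤ ε' ∧ ∀ α : ℝ,
        cdfQuantile F (α - ε') - (δ : EReal) ≤ cdfQuantile G α ∧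
          cdfQuantile G α ≤ cdfQuantile F (α + ε') + (δ : EReal)} :=
  levyGauge_le_iff_quantiles_general F G hF hG ε δ hε
end

section
/- Let F and G be cumulative distribution functions on the real line, δ ≥ 0, and write L := L_δ(F,G). Then for every real-valued random variable X and all α₁, α₂, μ ∈ ℝ: P( Q_{α₁}(F) − δ ≤ X − μ ≤ Q_{α₂}(F) + δ ) ≥ P( Q_{α₁+L}(G) ≤ X − μ ≤ Q_{α₂−L}(G) ) ≥ P( Q_{α₁+2L}(F) + δ ≤ X − μ ≤ Q_{α₂−2L}(F) − δ ), where the events are interpreted with the extended-real quantiles (an interval [a,b] being empty when a > b, and infinite endpoints giving half-lines or ℝ). -/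
open Filter MeasureTheory Set

/-- The key quantile shift estimate: if `∀ t, G t ≤ F (t + δ) + L` then
`Q_β(F) - δ ≤ Q_{β+L}(G)`. -/
lemma cdfQuantile_sub_le {F G : ℝ → ℝ} {δ L : ℝ}
    (hL : ∀ t, G t ≤ F (t + δ) + L) (β : ℝ) :
    cdfQuantile F β - (δ : EReal) ≤ cdfQuantile G (β + L) := by
  apply le_sInf
  rintro y ⟨x, hx, rfl⟩
  rw [EReal.sub_le_iff_le_add (.inl (EReal.coe_ne_bot δ)) (.inl (EReal.coe_ne_top δ))]
  rw [← EReal.coe_add]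
  apply sInf_le
  have hx' : β + L ≤ G x := hx
  have : β ≤ F (x + δ) := by linarith [hL x]
  exact ⟨x + δ, this, rfl⟩

/-- Sandwiching of coverage probabilities of prediction intervals via the Lévy gauge.
Intervals with extended-real quantile endpoints are interpreted via the inequalities on
`(X ω - μ : EReal)` (empty when the endpoints cross; half-lines / ℝ for infinite endpoints). -/
theorem levyGauge_predictionInterval_sandwich {Ω : Type*} [MeasurableSpace Ω]
    (P : Measure Ω) [IsProbabilityMeasure P] (X : Ω → ℝ) (hX : Measurable X)
    (F G : ℝ → ℝ) (hF : IsCDF F) (hG : IsCDF G)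
    (δ : ℝ) (hδ : 0 ≤ δ) (α₁ α₂ μ : ℝ) :
    P {ω | cdfQuantile G (α₁ + levyGauge δ F G) ≤ ((X ω - μ : ℝ) : EReal) ∧
          ((X ω - μ : ℝ) : EReal) ≤ cdfQuantile G (α₂ - levyGauge δ F G)} ≤
      P {ω | cdfQuantile F α₁ - (δ : EReal) ≤ ((X ω - μ : ℝ) : EReal) ∧
          ((X ω - μ : ℝ) : EReal) ≤ cdfQuantile F α₂ + (δ : EReal)} ∧
    P {ω | cdfQuantile F (α₁ + 2 * levyGauge δ F G) + (δ : EReal) ≤ ((X ω - μ : ℝ) : EReal) ∧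
          ((X ω - μ : ℝ) : EReal) ≤ cdfQuantile F (α₂ - 2 * levyGauge δ F G) - (δ : EReal)} ≤
      P {ω | cdfQuantile G (α₁ + levyGauge δ F G) ≤ ((X ω - μ : ℝ) : EReal) ∧
          ((X ω - μ : ℝ) : EReal) ≤ cdfQuantile G (α₂ - levyGauge δ F G)} := by
  set L := levyGauge δ F G with hLdef
  set S : Set ℝ :=
    {ε : ℝ | 0 ≤ ε ∧ ∀ t : ℝ, F (t - δ) - ε ≤ G t ∧ G t ≤ F (t + δ) + ε} with hSdef
  have hSne : S.Nonempty := by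
    refine ⟨1, zero_le_one, fun t => ⟨?_, ?_⟩⟩
    · linarith [hF.le_one (t - δ), hG.nonneg t]
    · linarith [hF.nonneg (t + δ), hG.le_one t]
  have hL1 : ∀ t, F (t - δ) - L ≤ G t := by
    intro t
    have : F (t - δ) - G t ≤ L := le_csInf hSne (fun ε hε => by linarith [(hε.2 t).1])
    linarith
  have hL2 : ∀ t, G t ≤ F (t + δ) + L := by
    intro t
    have : G t - F (t + δ) ≤ L := le_csInf hSne (fun ε hε => by linarith [(hε.2 t).2])
    linarith
  -- G t ≤ F (t + δ) + L gives lem1 : Q_F β - δ ≤ Q_G (β + L)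
  have lem1 : ∀ β : ℝ, cdfQuantile F β - (δ : EReal) ≤ cdfQuantile G (β + L) :=
    cdfQuantile_sub_le hL2
  -- F (t - δ) - L ≤ G t, i.e. F t ≤ G (t + δ) + L, gives lem2 : Q_G β - δ ≤ Q_F (β + L)
  have lem2 : ∀ β : ℝ, cdfQuantile G β - (δ : EReal) ≤ cdfQuantile F (β + L) := by
    refine cdfQuantile_sub_le (fun t => ?_)
    have := hL1 (t + δ)
    simpa using this
  constructor
  · apply measure_mono
    rintro ω ⟨h1, h2⟩
    constructor
    · exact le_trans (lem1 α₁) h1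
    · refine le_trans h2 ?_
      have := lem2 (α₂ - L)
      rw [sub_add_cancel] at this
      rwa [EReal.sub_le_iff_le_add (.inl (EReal.coe_ne_bot δ))
        (.inl (EReal.coe_ne_top δ))] at this
  · apply measure_mono
    rintro ω ⟨h1, h2⟩
    constructor
    · refine le_trans ?_ h1
      have := lem2 (α₁ + L)
      rw [show α₁ + L + L = α₁ + 2 * L by ring] at this
      rwa [EReal.sub_le_iff_le_add (.inl (EReal.coe_ne_bot δ))
        (.inl (EReal.coe_ne_top δ))] at this
    · refine le_trans h2 ?_
      have := lem1 (α₂ - 2 * L)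
      rw [show α₂ - 2 * L + L = α₂ - L by ring] at this
      exact this
end

section
/- Let f : ℝ → ℝ be a nondecreasing function and let X and Y be real-valued random variables (possibly on different probability spaces) with cumulative distribution functions F_X and F_Y. Then for every δ ≥ 0 and every t ∈ ℝ, P( f(X) > t ) − P( f(Y + δ) > t ) ≤ L_δ(F_X, F_Y). -/
open Filter MeasureTheory Set

/-- The cumulative distribution function of a real random variable `X` under `P`. -/
noncomputable def rvCdf {Ω : Type*} [MeasurableSpace Ω] (P : MeasureTheory.Measure Ω)
    (X : Ω → ℝ) (t : ℝ) : ℝ :=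
  (P {ω | X ω ≤ t}).toReal

open Topology
open scoped ENNReal

/-!
Set `s = {x | f x ≤ t}`, a lower set of `ℝ`, so that the left-hand side is
`P₂(Y + δ ∈ s) - P₁(X ∈ s)`. Whenever `ε` is admissible in the Lévy gauge, the law of `Y + δ`
puts at most `ε` more mass than the law of `X` on every half-line `Iic u`. A lower set of `ℝ` is
`∅`, `ℝ`, some `Iic b` or some `Iio b`, and `ℝ` and `Iio b` are increasing unions of such
half-lines, so continuity from below transfers the bound to `s`.
-/

theorem IsLowerSet.eq_empty_or_univ_or_Iic_or_Iio {α : Type*} [ConditionallyCompleteLinearOrder α]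
    {s : Set α} (hs : IsLowerSet s) : s = ∅ ∨ s = univ ∨ ∃ b, s = Iic b ∨ s = Iio b := by
  rcases s.eq_empty_or_nonempty with hempty | hne
  · exact Or.inl hempty
  by_cases hbdd : BddAbove s
  · have hIio : Iio (sSup s) ⊆ s := fun x hx =>
      have ⟨y, hy, hxy⟩ := exists_lt_of_lt_csSup hne hx
      hs hxy.le hy
    have hIic : s ⊆ Iic (sSup s) := fun x hx => le_csSup hbdd hx
    refine Or.inr (Or.inr ⟨sSup s, ?_⟩)
    by_cases hmem : sSup s ∈ s
    · exact Or.inl (hIic.antisymm (isLowerSet_iff_Iic_subset.1 hs hmem))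
    · refine Or.inr (Subset.antisymm (fun x hx => ?_) hIio)
      exact (hIic hx).lt_of_ne fun hx_eq => hmem (hx_eq ▸ hx)
  · refine Or.inr (Or.inl (eq_univ_of_forall fun x => ?_))
    obtain ⟨y, hy, hxy⟩ := not_bddAbove_iff.1 hbdd x
    exact hs hxy.le hy

theorem ENNReal.toReal_le_toReal_add_iff {a b : ℝ≥0∞} {ε : ℝ} (ha : a ≠ ∞) (hb : b ≠ ∞)
    (hε : 0 ≤ ε) : a.toReal ≤ b.toReal + ε ↔ a ≤ b + ENNReal.ofReal ε := by
  rw [← ENNReal.ofReal_le_ofReal_iff (by positivity), ENNReal.ofReal_add ENNReal.toReal_nonneg hε,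
    ENNReal.ofReal_toReal ha, ENNReal.ofReal_toReal hb]

theorem measure_le_add_of_tendsto_measure_Iic {α ι : Type*} [MeasurableSpace α] [Preorder α]
    {μ ν : Measure α} {c : ℝ≥0∞} {l : Filter ι} [l.NeBot] {x : ι → α} {s : Set α}
    (h : ∀ u, ν (Iic u) ≤ μ (Iic u) + c)
    (hlim : Tendsto (fun i => ν (Iic (x i))) l (𝓝 (ν s))) (hsub : ∀ i, Iic (x i) ⊆ s) :
    ν s ≤ μ s + c :=
  le_of_tendsto' hlim fun i => (h (x i)).trans (by gcongr; exact hsub i)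

theorem measure_le_add_of_forall_measure_Iic_le {μ ν : Measure ℝ} {c : ℝ≥0∞}
    (h : ∀ u, ν (Iic u) ≤ μ (Iic u) + c) {s : Set ℝ} (hs : IsLowerSet s) : ν s ≤ μ s + c := by
  rcases hs.eq_empty_or_univ_or_Iic_or_Iio with rfl | rfl | ⟨b, rfl | rfl⟩
  · simp
  · exact measure_le_add_of_tendsto_measure_Iic h (tendsto_measure_Iic_atTop ν)
      fun _ => subset_univ _
  · exact h b
  · obtain ⟨x, hx_mono, hx_lt, hx_lim⟩ := exists_seq_strictMono_tendsto b
    have hlim : Tendsto (fun n => ν (Iic (x n))) atTop (𝓝 (ν (Iio b))) := by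
      rw [← iUnion_Iic_eq_Iio_of_lt_of_tendsto hx_lt hx_lim]
      exact tendsto_measure_iUnion_atTop (monotone_Iic.comp hx_mono.monotone)
    exact measure_le_add_of_tendsto_measure_Iic h hlim fun n => Iic_subset_Iio.2 (hx_lt n)

theorem measureReal_preimage_add_le_of_rvCdf_le {Ω₁ Ω₂ : Type*} [MeasurableSpace Ω₁]
    [MeasurableSpace Ω₂] {P₁ : Measure Ω₁} {P₂ : Measure Ω₂} [IsFiniteMeasure P₁]
    [IsFiniteMeasure P₂] {X : Ω₁ → ℝ} {Y : Ω₂ → ℝ} (hX : Measurable X) (hY : Measurable Y)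
    {δ ε : ℝ} (hε : 0 ≤ ε) (h : ∀ u, rvCdf P₂ Y u ≤ rvCdf P₁ X (u + δ) + ε) {s : Set ℝ}
    (hs : IsLowerSet s) (hs_meas : MeasurableSet s) :
    P₂.real ((Y · + δ) ⁻¹' s) ≤ P₁.real (X ⁻¹' s) + ε := by
  have hYδ : Measurable (Y · + δ) := hY.add_const δ
  rw [measureReal_def, measureReal_def,
    ENNReal.toReal_le_toReal_add_iff (measure_ne_top _ _) (measure_ne_top _ _) hε,
    ← Measure.map_apply hYδ hs_meas, ← Measure.map_apply hX hs_meas]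
  refine measure_le_add_of_forall_measure_Iic_le (fun u => ?_) hs
  rw [Measure.map_apply hYδ measurableSet_Iic, Measure.map_apply hX measurableSet_Iic,
    ← ENNReal.toReal_le_toReal_add_iff (measure_ne_top _ _) (measure_ne_top _ _) hε]
  simpa [rvCdf, preimage, le_sub_iff_add_le] using h (u - δ)

theorem rvCdf_mem_Icc {Ω : Type*} [MeasurableSpace Ω] (P : Measure Ω) [IsProbabilityMeasure P]
    (X : Ω → ℝ) (t : ℝ) : rvCdf P X t ∈ Icc 0 1 :=
  ⟨ENNReal.toReal_nonneg, measureReal_le_one⟩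

theorem le_levyGauge {δ a : ℝ} {F G : ℝ → ℝ} (hF : ∀ t, F t ∈ Icc 0 1) (hG : ∀ t, G t ∈ Icc 0 1)
    (h : ∀ ε, 0 ≤ ε → (∀ t, G t ≤ F (t + δ) + ε) → a ≤ ε) : a ≤ levyGauge δ F G := by
  refine le_csInf ⟨1, zero_le_one, fun t => ⟨?_, ?_⟩⟩ fun ε hε => h ε hε.1 fun t => (hε.2 t).2
  · linarith [(hF (t - δ)).2, (hG t).1]
  · linarith [(hF (t + δ)).1, (hG t).2]

theorem prob_diff_le_levyGauge_general {Ω₁ Ω₂ : Type*} [MeasurableSpace Ω₁] [MeasurableSpace Ω₂]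
    (P₁ : Measure Ω₁) (P₂ : Measure Ω₂)
    [IsProbabilityMeasure P₁] [IsProbabilityMeasure P₂]
    (X : Ω₁ → ℝ) (Y : Ω₂ → ℝ) (hX : Measurable X) (hY : Measurable Y)
    (f : ℝ → ℝ) (hf : Monotone f) (δ : ℝ) (t : ℝ) :
    (P₁ {ω | t < f (X ω)}).toReal - (P₂ {ω | t < f (Y ω + δ)}).toReal ≤
      levyGauge δ (rvCdf P₁ X) (rvCdf P₂ Y) := by
  refine le_levyGauge (rvCdf_mem_Icc P₁ X) (rvCdf_mem_Icc P₂ Y) fun ε hε hcdf => ?_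
  set s := f ⁻¹' Iic t
  have hs_meas : MeasurableSet s := hf.measurable measurableSet_Iic
  have hmass := measureReal_preimage_add_le_of_rvCdf_le hX hY hε hcdf
    ((isLowerSet_Iic t).preimage hf) hs_meas
  have hcompl₁ : {ω | t < f (X ω)} = (X ⁻¹' s)ᶜ := by ext; simp [s]
  have hcompl₂ : {ω | t < f (Y ω + δ)} = ((Y · + δ) ⁻¹' s)ᶜ := by ext; simp [s]
  rw [hcompl₁, hcompl₂, ← measureReal_def, ← measureReal_def,
    probReal_compl_eq_one_sub (hX hs_meas), probReal_compl_eq_one_sub (hY.add_const δ hs_meas)]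
  linarith

/-- For nondecreasing `f` and random variables `X`, `Y` (possibly on different spaces),
`P(f(X) > t) - P(f(Y + δ) > t) ≤ L_δ(F_X, F_Y)`. -/
theorem prob_diff_le_levyGauge {Ω₁ Ω₂ : Type*} [MeasurableSpace Ω₁] [MeasurableSpace Ω₂]
    (P₁ : Measure Ω₁) (P₂ : Measure Ω₂)
    [IsProbabilityMeasure P₁] [IsProbabilityMeasure P₂]
    (X : Ω₁ → ℝ) (Y : Ω₂ → ℝ) (hX : Measurable X) (hY : Measurable Y)
    (f : ℝ → ℝ) (hf : Monotone f) (δ : ℝ) (hδ : 0 ≤ δ) (t : ℝ) :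
    (P₁ {ω | t < f (X ω)}).toReal - (P₂ {ω | t < f (Y ω + δ)}).toReal ≤
      levyGauge δ (rvCdf P₁ X) (rvCdf P₂ Y) :=
  prob_diff_le_levyGauge_general P₁ P₂ X Y hX hY f hf δ t
end

section
/- Let F and G be cumulative distribution functions on the real line with corresponding Borel probability measures μ_F and μ_G, and let δ ≥ 0. Then for every probability space carrying random variables X with law μ_F and Y with law μ_G (i.e., every coupling of μ_F and μ_G), L_δ(F,G) ≤ P(|X − Y| > δ). Consequently, if δ > 0 then for every p > 0, L_δ(F,G) ≤ δ^{−p}·E[|X − Y|^p] for every such coupling. -/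
open Filter MeasureTheory Set

/-- Coupling bound for the Lévy gauge: for any coupling `(X, Y)` of the two distributions,
`L_δ(F,G) ≤ P(|X - Y| > δ)`, and for `δ > 0`, `L_δ(F,G) ≤ δ^{-p} E[|X - Y|^p]`.
Here `F` and `G` are the cdfs of the laws of `X` and `Y`. -/
theorem levyGauge_le_coupling {Ω : Type*} [MeasurableSpace Ω]
    (P : Measure Ω) [IsProbabilityMeasure P]
    (X Y : Ω → ℝ) (hX : Measurable X) (hY : Measurable Y)
    (F G : ℝ → ℝ) (hF : F = rvCdf P X) (hG : G = rvCdf P Y)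
    (δ : ℝ) (hδ : 0 ≤ δ) :
    levyGauge δ F G ≤ (P {ω | δ < |X ω - Y ω|}).toReal ∧
    (0 < δ → ∀ p : ℝ, 0 < p →
      ENNReal.ofReal (levyGauge δ F G) ≤
        ENNReal.ofReal δ ^ (-p) * ∫⁻ ω, ENNReal.ofReal (|X ω - Y ω| ^ p) ∂P) := by
  set A : Set Ω := {ω | δ < |X ω - Y ω|} with hA
  set ε : ℝ := (P A).toReal with hε
  have hε0 : 0 ≤ ε := ENNReal.toReal_nonneg
  -- key pointwise inequalities
  have key : ∀ t : ℝ, F (t - δ) - ε ≤ G t ∧ G t ≤ F (t + δ) + ε := by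
    intro t
    have hsub1 : {ω | X ω ≤ t - δ} ⊆ {ω | Y ω ≤ t} ∪ A := by
      intro ω hω
      by_cases h : δ < |X ω - Y ω|
      · exact Or.inr h
      · push_neg at h
        left
        have h2 := abs_le.mp h
        simp only [Set.mem_setOf_eq] at hω ⊢
        linarith [h2.1]
    have hsub2 : {ω | Y ω ≤ t} ⊆ {ω | X ω ≤ t + δ} ∪ A := by
      intro ω hω
      by_cases h : δ < |X ω - Y ω|
      · exact Or.inr h
      · push_neg at h
        left
        have := abs_le.mp h
        simp only [Set.mem_setOf_eq] at hω ⊢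
        linarith [this.2]
    have fin : ∀ s : Set Ω, P s ≠ (⊤ : ENNReal) := fun s => measure_ne_top P s
    have h1 : (P {ω | X ω ≤ t - δ}).toReal ≤ (P {ω | Y ω ≤ t}).toReal + ε := by
      have := (measure_mono hsub1).trans (measure_union_le (μ := P) _ _)
      have h' := ENNReal.toReal_mono (ENNReal.add_ne_top.mpr ⟨fin _, fin _⟩) this
      rwa [ENNReal.toReal_add (fin _) (fin _)] at h'
    have h2 : (P {ω | Y ω ≤ t}).toReal ≤ (P {ω | X ω ≤ t + δ}).toReal + ε := by
      have := (measure_mono hsub2).trans (measure_union_le (μ := P) _ _)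
      have h' := ENNReal.toReal_mono (ENNReal.add_ne_top.mpr ⟨fin _, fin _⟩) this
      rwa [ENNReal.toReal_add (fin _) (fin _)] at h'
    subst hF hG
    constructor
    · simp only [rvCdf]; linarith
    · simp only [rvCdf]; linarith
  have hmem : ε ∈ {x : ℝ | 0 ≤ x ∧ ∀ t : ℝ, F (t - δ) - x ≤ G t ∧ G t ≤ F (t + δ) + x} :=
    ⟨hε0, key⟩
  have hbdd : BddBelow {x : ℝ | 0 ≤ x ∧ ∀ t : ℝ, F (t - δ) - x ≤ G t ∧ G t ≤ F (t + δ) + x} :=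
    ⟨0, fun x hx => hx.1⟩
  have hmain : levyGauge δ F G ≤ ε := csInf_le hbdd hmem
  refine ⟨hmain, ?_⟩
  intro hδpos p hp
  have hAε : ENNReal.ofReal (levyGauge δ F G) ≤ P A := by
    calc ENNReal.ofReal (levyGauge δ F G) ≤ ENNReal.ofReal ε := ENNReal.ofReal_le_ofReal hmain
    _ = P A := ENNReal.ofReal_toReal (measure_ne_top P A)
  refine hAε.trans ?_
  -- Markov inequality
  set f : Ω → ENNReal := fun ω => ENNReal.ofReal (|X ω - Y ω| ^ p) with hf
  have hfm : AEMeasurable f P := by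
    apply Measurable.aemeasurable
    exact ENNReal.measurable_ofReal.comp (((hX.sub hY).abs).pow_const p)
  have hsub : A ⊆ {ω | ENNReal.ofReal (δ ^ p) ≤ f ω} := by
    intro ω hω
    simp only [Set.mem_setOf_eq] at hω ⊢
    exact ENNReal.ofReal_le_ofReal (Real.rpow_le_rpow hδ hω.le hp.le)
  have hmarkov := mul_meas_ge_le_lintegral₀ hfm (ENNReal.ofReal (δ ^ p))
  have hAle : ENNReal.ofReal (δ ^ p) * P A ≤ ∫⁻ ω, f ω ∂P :=
    le_trans (mul_le_mul_right (measure_mono hsub) _) hmarkov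
  have hne : ENNReal.ofReal (δ ^ p) ≠ 0 := by
    simp [ENNReal.ofReal_eq_zero, not_le, Real.rpow_pos_of_pos hδpos]
  have hnetop : ENNReal.ofReal (δ ^ p) ≠ ⊤ := ENNReal.ofReal_ne_top
  have : P A ≤ (ENNReal.ofReal (δ ^ p))⁻¹ * ∫⁻ ω, f ω ∂P := by
    calc P A = (ENNReal.ofReal (δ ^ p))⁻¹ * (ENNReal.ofReal (δ ^ p) * P A) := by
          rw [← mul_assoc, ENNReal.inv_mul_cancel hne hnetop, one_mul]
      _ ≤ (ENNReal.ofReal (δ ^ p))⁻¹ * ∫⁻ ω, f ω ∂P := mul_le_mul_right hAle _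
  have hrw : ENNReal.ofReal δ ^ (-p) = (ENNReal.ofReal (δ ^ p))⁻¹ := by
    rw [ENNReal.rpow_neg, ENNReal.ofReal_rpow_of_pos hδpos]
  rw [hrw]
  exact this
end

section
/- Let n ∈ ℕ, let a₁,…,aₙ and b₁,…,bₙ be real numbers, and let p₁,…,pₙ ≥ 0 with Σᵢ pᵢ = 1. Define the weighted empirical distribution functions F_a(t) = Σᵢ pᵢ·1{aᵢ ≤ t} and F_b(t) = Σᵢ pᵢ·1{bᵢ ≤ t}. Then for every δ ≥ 0, L_δ(F_a, F_b) ≤ Σᵢ pᵢ·1{|aᵢ − bᵢ| > δ}. -/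
open Filter MeasureTheory Set

/-- Bound for the Lévy gauge between two weighted empirical distribution functions. -/
theorem levyGauge_ecdf_le (n : ℕ) (a b p : Fin n → ℝ)
    (hp : ∀ i, 0 ≤ p i) (hsum : ∑ i, p i = 1) (δ : ℝ) (hδ : 0 ≤ δ) :
    levyGauge δ (fun t : ℝ => ∑ i, p i * (if a i ≤ t then (1 : ℝ) else 0))
        (fun t : ℝ => ∑ i, p i * (if b i ≤ t then (1 : ℝ) else 0)) ≤
      ∑ i, p i * (if δ < |a i - b i| then (1 : ℝ) else 0) := by
  apply csInf_le
  · exact ⟨0, fun x hx => hx.1⟩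
  refine ⟨Finset.sum_nonneg fun i _ => mul_nonneg (hp i) (by positivity), fun t => ?_⟩
  have key1 : ∀ i ∈ Finset.univ, p i * (if a i ≤ t - δ then (1 : ℝ) else 0) ≤
      p i * (if b i ≤ t then (1 : ℝ) else 0) +
        p i * (if δ < |a i - b i| then (1 : ℝ) else 0) := by
    intro i _
    rcases le_or_gt (|a i - b i|) δ with h | h
    · rw [if_neg (not_lt.mpr h), mul_zero, add_zero]
      refine mul_le_mul_of_nonneg_left ?_ (hp i)
      obtain ⟨h1, h2⟩ := abs_le.mp h
      split_ifs with ha hb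
      · exact le_rfl
      · exact absurd (by linarith) hb
      all_goals norm_num
    · rw [if_pos h, mul_one]
      have := hp i
      split_ifs <;> nlinarith
  have key2 : ∀ i ∈ Finset.univ, p i * (if b i ≤ t then (1 : ℝ) else 0) ≤
      p i * (if a i ≤ t + δ then (1 : ℝ) else 0) +
        p i * (if δ < |a i - b i| then (1 : ℝ) else 0) := by
    intro i _
    rcases le_or_gt (|a i - b i|) δ with h | h
    · rw [if_neg (not_lt.mpr h), mul_zero, add_zero]
      refine mul_le_mul_of_nonneg_left ?_ (hp i)
      obtain ⟨h1, h2⟩ := abs_le.mp h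
      split_ifs with ha hb
      · exact le_rfl
      · exact absurd (by linarith) hb
      all_goals norm_num
    · rw [if_pos h, mul_one]
      have := hp i
      split_ifs <;> nlinarith
  have s1 := Finset.sum_le_sum key1
  have s2 := Finset.sum_le_sum key2
  rw [Finset.sum_add_distrib] at s1 s2
  constructor <;> simp only <;> linarith
end

section
/- Let A ⊆ ℝ be a Borel set and let X and Y be real-valued random variables on a common probability space. Then ∫_A E[ |1{X ≤ t} − 1{Y ≤ t}| ] dλ(t) ≤ E[ min(λ(A), |X − Y|) ], where λ is Lebesgue measure and min(∞, s) := s for s ∈ ℝ when λ(A) = ∞. -/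
open Filter MeasureTheory Set

/-- `∫_A E[|1{X ≤ t} - 1{Y ≤ t}|] dλ(t) ≤ E[min(λ(A), |X - Y|)]`, where the minimum is
taken in the extended nonnegative reals (so `min(∞, s) = s`). -/
theorem lintegral_indicator_diff_le {Ω : Type*} [MeasurableSpace Ω]
    (P : Measure Ω) [IsProbabilityMeasure P]
    (X Y : Ω → ℝ) (hX : Measurable X) (hY : Measurable Y)
    (A : Set ℝ) (hA : MeasurableSet A) :
    (∫⁻ t in A,
        ∫⁻ ω, ENNReal.ofReal |(if X ω ≤ t then (1 : ℝ) else 0) -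
          (if Y ω ≤ t then (1 : ℝ) else 0)| ∂P) ≤
      ∫⁻ ω, min (volume A) (ENNReal.ofReal |X ω - Y ω|) ∂P := by
  have hmeas : Measurable fun p : ℝ × Ω => ENNReal.ofReal
      |(if X p.2 ≤ p.1 then (1 : ℝ) else 0) - (if Y p.2 ≤ p.1 then (1 : ℝ) else 0)| := by
    apply Measurable.ennreal_ofReal
    apply Measurable.abs
    apply Measurable.sub
    · exact Measurable.ite (measurableSet_le (hX.comp measurable_snd) measurable_fst)
        measurable_const measurable_const
    · exact Measurable.ite (measurableSet_le (hY.comp measurable_snd) measurable_fst)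
        measurable_const measurable_const
  rw [lintegral_lintegral_swap hmeas.aemeasurable]
  apply lintegral_mono
  intro ω
  set a := min (X ω) (Y ω)
  set b := max (X ω) (Y ω)
  have key : ∀ t : ℝ, ENNReal.ofReal
      |(if X ω ≤ t then (1 : ℝ) else 0) - (if Y ω ≤ t then (1 : ℝ) else 0)| =
      (Set.Ico a b).indicator (fun _ => (1 : ENNReal)) t := by
    intro t
    by_cases h1 : X ω ≤ t <;> by_cases h2 : Y ω ≤ t
    · have ht : t ∉ Set.Ico a b := fun h => absurd h.2 (not_lt.mpr (max_le h1 h2))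
      simp [h1, h2, Set.indicator_of_notMem ht]
    · have ht : t ∈ Set.Ico a b :=
        ⟨le_trans (min_le_left _ _) h1, lt_of_lt_of_le (not_le.mp h2) (le_max_right _ _)⟩
      simp [h1, h2, Set.indicator_of_mem ht]
    · have ht : t ∈ Set.Ico a b :=
        ⟨le_trans (min_le_right _ _) h2, lt_of_lt_of_le (not_le.mp h1) (le_max_left _ _)⟩
      simp [h1, h2, Set.indicator_of_mem ht]
    · have ht : t ∉ Set.Ico a b := fun h =>
        absurd h.1 (not_le.mpr (lt_min (not_le.mp h1) (not_le.mp h2)))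
      simp [h1, h2, Set.indicator_of_notMem ht]
  dsimp only
  have hval : (∫⁻ t in A, ENNReal.ofReal
      |(if X ω ≤ t then (1 : ℝ) else 0) - (if Y ω ≤ t then (1 : ℝ) else 0)|) =
      volume (Set.Ico a b ∩ A) := by
    simp_rw [key]
    rw [lintegral_indicator measurableSet_Ico, Measure.restrict_restrict measurableSet_Ico]
    simp
  rw [hval]
  apply le_min
  · exact measure_mono inter_subset_right
  · calc volume (Set.Ico a b ∩ A) ≤ volume (Set.Ico a b) := measure_mono inter_subset_left
      _ = ENNReal.ofReal (b - a) := by simp [Real.volume_Ico]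
      _ = ENNReal.ofReal |X ω - Y ω| := by rw [max_sub_min_eq_abs, abs_sub_comm]
end

section
/- For each n ∈ ℕ let y_n and ŷ_n be real-valued random variables on a probability space, and for each pair (α₁, α₂) with 0 ≤ α₁ ≤ α₂ ≤ 1 let [L_n^{α₁,α₂}, U_n^{α₁,α₂}] be a random closed interval (L, U measurable with L ≤ U) such that ŷ_n ∈ [L_n^{α₁,α₂}, U_n^{α₁,α₂}] almost surely and the intervals are asymptotically marginally conservative, i.e., liminf_{n→∞} P( L_n^{α₁,α₂} ≤ y_n ≤ U_n^{α₁,α₂} ) ≥ α₂ − α₁ for every such pair. If the sequence of prediction errors (y_n − ŷ_n)_{n∈ℕ} is not stochastically bounded, then there exists ε > 0 such that for every pair (α₁, α₂) with α₂ − α₁ ≥ 1 − ε one has limsup_{n→∞} E( U_n^{α₁,α₂} − L_n^{α₁,α₂} ) = ∞, i.e., the expected length of the prediction interval diverges to infinity along a subsequence. -/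
/-!
Let `η > 0` witness that the errors `y n - ŷ n` are not tight, and take `ε = η / 2`. Each single
error is a.s. finite, so for every `K` the tail `P n {K < |y n - ŷ n|}` exceeds `η` for infinitely
many `n`, while conservativeness makes the coverage eventually larger than `1 - 3η/4`. For such
`n`, with probability at least `η/4` the interval contains both `y n` and `ŷ n` although they are
more than `K` apart, so by Markov's inequality its expected length is at least `Kη/4`.
-/

open Filter MeasureTheory Set Topology
open scoped ENNReal

theorem tendsto_measureReal_lt_atTop {α : Type*} [MeasurableSpace α] (μ : Measure α)
    [IsFiniteMeasure μ] {f : α → ℝ} (hf : Measurable f) :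
    Tendsto (fun K : ℝ => μ.real {x | K < f x}) atTop (𝓝 0) := by
  have hlim := tendsto_measure_iInter_atTop (μ := μ) (s := fun K : ℝ => {x | K < f x})
    (fun _ => (measurableSet_lt measurable_const hf).nullMeasurableSet)
    (fun _ _ hab _ hx => hab.trans_lt hx) ⟨0, measure_ne_top _ _⟩
  have hempty : ⋂ K : ℝ, {x | K < f x} = ∅ :=
    eq_empty_of_forall_notMem fun x hx => lt_irrefl (f x) (mem_iInter.1 hx (f x))
  rw [hempty, measure_empty] at hlim
  rw [← ENNReal.toReal_zero]
  exact (ENNReal.tendsto_toReal ENNReal.zero_ne_top).comp hlim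

theorem frequently_lt_measureReal_of_not_tight {Ω : ℕ → Type*} [∀ n, MeasurableSpace (Ω n)]
    (P : ∀ n, Measure (Ω n)) [∀ n, IsFiniteMeasure (P n)] {e : ∀ n, Ω n → ℝ}
    (he : ∀ n, Measurable (e n)) {η : ℝ} (hη : 0 < η)
    (hfar : ∀ K : ℝ, 0 < K → ∃ n, η < (P n).real {ω | K < |e n ω|}) (K : ℝ) :
    ∃ᶠ n in atTop, η < (P n).real {ω | K < |e n ω|} := by
  refine frequently_atTop.2 fun N => ?_
  by_contra! hlate
  have hearly : ∀ᶠ K' in atTop, ∀ n ∈ Finset.range N, (P n).real {ω | K' < |e n ω|} ≤ η :=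
    (Finset.eventually_all _).2 fun n _ =>
      (tendsto_measureReal_lt_atTop (P n) (he n).abs).eventually (ge_mem_nhds hη)
  obtain ⟨K', hK'early, hK'ge⟩ := (hearly.and (eventually_ge_atTop (max K 1))).exists
  obtain ⟨n, hn⟩ := hfar K' (one_pos.trans_le ((le_max_right K 1).trans hK'ge))
  rcases lt_or_ge n N with hnN | hnN
  · exact (hK'early n (Finset.mem_range.2 hnN)).not_gt hn
  · refine (hlate n hnN).not_gt (hn.trans_le (measureReal_mono fun ω hω => ?_))
    exact ((le_max_left K 1).trans hK'ge).trans_lt hω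

theorem measureReal_add_measureReal_le_measureReal_inter_add_one {α : Type*}
    [MeasurableSpace α] (μ : Measure α) [IsProbabilityMeasure μ] {s : Set α}
    (hs : MeasurableSet s) (t : Set α) :
    μ.real s + μ.real t ≤ μ.real (s ∩ t) + 1 := by
  rw [← measureReal_union_add_inter' hs]
  linarith [measureReal_le_one (μ := μ) (s := s ∪ t)]

theorem ofReal_mul_measure_le_lintegral_length {α : Type*} [MeasurableSpace α] (μ : Measure α)
    {y yhat L U : α → ℝ} (hL : Measurable L) (hU : Measurable U)
    (hcontain : ∀ᵐ ω ∂μ, L ω ≤ yhat ω ∧ yhat ω ≤ U ω) (K : ℝ) :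
    ENNReal.ofReal K * μ ({ω | K < |y ω - yhat ω|} ∩ {ω | L ω ≤ y ω ∧ y ω ≤ U ω}) ≤
      ∫⁻ ω, ENNReal.ofReal (U ω - L ω) ∂μ := by
  calc ENNReal.ofReal K * μ ({ω | K < |y ω - yhat ω|} ∩ {ω | L ω ≤ y ω ∧ y ω ≤ U ω})
      ≤ ENNReal.ofReal K * μ {ω | ENNReal.ofReal K ≤ ENNReal.ofReal (U ω - L ω)} := by
        gcongr ENNReal.ofReal K * ?_
        refine measure_mono_ae (hcontain.mono ?_)
        rintro ω ⟨hLyhat, hyhatU⟩ ⟨hfar, hLy, hyU⟩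
        exact ENNReal.ofReal_le_ofReal
          (hfar.le.trans (abs_sub_le_of_le_of_le hLy hyU hLyhat hyhatU))
    _ ≤ ∫⁻ ω, ENNReal.ofReal (U ω - L ω) ∂μ :=
        mul_meas_ge_le_lintegral₀ (hU.sub hL).ennreal_ofReal.aemeasurable _

theorem expected_length_diverges_of_not_stochasticallyBounded_general
    (Ω : ℕ → Type*) [∀ n, MeasurableSpace (Ω n)]
    (P : ∀ n, Measure (Ω n)) [∀ n, IsProbabilityMeasure (P n)]
    (y yhat : ∀ n, Ω n → ℝ)
    (L U : ∀ n : ℕ, ℝ → ℝ → Ω n → ℝ)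
    (hy : ∀ n, Measurable (y n)) (hyhat : ∀ n, Measurable (yhat n))
    (hL : ∀ n α₁ α₂, Measurable (L n α₁ α₂)) (hU : ∀ n α₁ α₂, Measurable (U n α₁ α₂))
    (hcontain : ∀ n α₁ α₂, 0 ≤ α₁ → α₁ ≤ α₂ → α₂ ≤ 1 →
      ∀ᵐ ω ∂(P n), L n α₁ α₂ ω ≤ yhat n ω ∧ yhat n ω ≤ U n α₁ α₂ ω)
    (hconservative : ∀ α₁ α₂, 0 ≤ α₁ → α₁ ≤ α₂ → α₂ ≤ 1 →
      α₂ - α₁ ≤ Filter.liminf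
        (fun n => ((P n) {ω | L n α₁ α₂ ω ≤ y n ω ∧ y n ω ≤ U n α₁ α₂ ω}).toReal)
        Filter.atTop)
    (hnotbounded : ¬ (∀ η : ℝ, 0 < η → ∃ K : ℝ, 0 < K ∧
      ∀ n, ((P n) {ω | K < |y n ω - yhat n ω|}).toReal ≤ η)) :
    ∃ ε : ℝ, 0 < ε ∧ ∀ α₁ α₂, 0 ≤ α₁ → α₁ ≤ α₂ → α₂ ≤ 1 → 1 - ε ≤ α₂ - α₁ →
      Filter.limsup
        (fun n => ∫⁻ ω, ENNReal.ofReal (U n α₁ α₂ ω - L n α₁ α₂ ω) ∂(P n))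
        Filter.atTop = ⊤ := by
  push Not at hnotbounded
  simp only [← measureReal_def] at hconservative hnotbounded
  obtain ⟨η, hη, hfar⟩ := hnotbounded
  have hmeas (n : ℕ) : Measurable fun ω => y n ω - yhat n ω := (hy n).sub (hyhat n)
  refine ⟨η / 2, by positivity, fun α₁ α₂ h₀ h₁₂ h₁ hlevel => ?_⟩
  have hcover : ∀ᶠ n in atTop,
      1 - 3 * η / 4 < (P n).real {ω | L n α₁ α₂ ω ≤ y n ω ∧ y n ω ≤ U n α₁ α₂ ω} :=
    eventually_lt_of_lt_liminf (by linarith [hconservative α₁ α₂ h₀ h₁₂ h₁])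
      (isBoundedUnder_of_eventually_ge (.of_forall fun _ => measureReal_nonneg))
  refine ENNReal.eq_top_of_forall_nnreal_le fun r => le_limsup_of_frequently_le ?_
  have hheavy := frequently_lt_measureReal_of_not_tight P hmeas hη hfar (4 * r / η)
  refine (hheavy.and_eventually hcover).mono fun n ⟨hA, hC⟩ => ?_
  set A := {ω | 4 * r / η < |y n ω - yhat n ω|}
  set C := {ω | L n α₁ α₂ ω ≤ y n ω ∧ y n ω ≤ U n α₁ α₂ ω}
  have hAC : η / 4 ≤ (P n).real (A ∩ C) := by
    linarith [measureReal_add_measureReal_le_measureReal_inter_add_one (P n) (s := A)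
      (measurableSet_lt measurable_const (hmeas n).abs) C]
  calc (r : ℝ≥0∞) = ENNReal.ofReal (4 * r / η) * ENNReal.ofReal (η / 4) := by
        rw [← ENNReal.ofReal_mul (by positivity)]
        field_simp
        simp
    _ ≤ ENNReal.ofReal (4 * r / η) * P n (A ∩ C) := by
        gcongr
        exact ENNReal.ofReal_le_of_le_toReal hAC
    _ ≤ _ := ofReal_mul_measure_le_lintegral_length (P n) (hL n α₁ α₂) (hU n α₁ α₂)
        (hcontain n α₁ α₂ h₀ h₁₂ h₁) _

/-- If a method of prediction intervals `[L, U]` always contains the predictor `ŷ_n` and is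
asymptotically marginally conservative, but the prediction errors `y_n - ŷ_n` are not
stochastically bounded, then there is `ε > 0` such that for every nominal level
`α₂ - α₁ ≥ 1 - ε` the expected interval length diverges to `∞` along a subsequence
(i.e., its limsup is `∞`). -/
theorem expected_length_diverges_of_not_stochasticallyBounded
    (Ω : ℕ → Type*) [∀ n, MeasurableSpace (Ω n)]
    (P : ∀ n, Measure (Ω n)) [∀ n, IsProbabilityMeasure (P n)]
    (y yhat : ∀ n, Ω n → ℝ)
    (L U : ∀ n : ℕ, ℝ → ℝ → Ω n → ℝ)
    (hy : ∀ n, Measurable (y n)) (hyhat : ∀ n, Measurable (yhat n))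
    (hL : ∀ n α₁ α₂, Measurable (L n α₁ α₂)) (hU : ∀ n α₁ α₂, Measurable (U n α₁ α₂))
    (hLU : ∀ n α₁ α₂, 0 ≤ α₁ → α₁ ≤ α₂ → α₂ ≤ 1 → ∀ ω, L n α₁ α₂ ω ≤ U n α₁ α₂ ω)
    (hcontain : ∀ n α₁ α₂, 0 ≤ α₁ → α₁ ≤ α₂ → α₂ ≤ 1 →
      ∀ᵐ ω ∂(P n), L n α₁ α₂ ω ≤ yhat n ω ∧ yhat n ω ≤ U n α₁ α₂ ω)
    (hconservative : ∀ α₁ α₂, 0 ≤ α₁ → α₁ ≤ α₂ → α₂ ≤ 1 →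
      α₂ - α₁ ≤ Filter.liminf
        (fun n => ((P n) {ω | L n α₁ α₂ ω ≤ y n ω ∧ y n ω ≤ U n α₁ α₂ ω}).toReal)
        Filter.atTop)
    (hnotbounded : ¬ (∀ η : ℝ, 0 < η → ∃ K : ℝ, 0 < K ∧
      ∀ n, ((P n) {ω | K < |y n ω - yhat n ω|}).toReal ≤ η)) :
    ∃ ε : ℝ, 0 < ε ∧ ∀ α₁ α₂, 0 ≤ α₁ → α₁ ≤ α₂ → α₂ ≤ 1 → 1 - ε ≤ α₂ - α₁ →
      Filter.limsup
        (fun n => ∫⁻ ω, ENNReal.ofReal (U n α₁ α₂ ω - L n α₁ α₂ ω) ∂(P n))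
        Filter.atTop = ⊤ :=
  expected_length_diverges_of_not_stochasticallyBounded_general Ω P y yhat L U hy hyhat hL hU
    hcontain hconservative hnotbounded
end
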